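/- arXiv:2108.13845 — 8 statements merged into one kernel-verified Lean document; each statement's English description precedes it below -/
import Mathlib

section
/- Let a and b be odd integers with a > -b, a = 2^ν₁ - δ for some ν₁ ≥ 1 and δ = ±1 with δb > 0, and T the generalized Collatz map T(n) = n/2 (n even), (an+b)/2 (n odd). Then T^(ν₁)(δb) = δb, i.e., δb lies on a cycle of length ν₁. -/
/-- If `a = 2 ^ ν₁ - δ` with `δ = ±1` and `δ * b > 0`, then
`T^[ν₁] (δ*b) = δ*b`, i.e. `δ*b` lies on a cycle of length `ν₁`. -/
theorem second_trivial_cycle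
    (a b δ : ℤ) (ha : Odd a) (hb : Odd b) (hab : a > -b)
    (ν₁ : ℕ) (hν₁ : 1 ≤ ν₁) (hδ : δ = 1 ∨ δ = -1)
    (haν : a = 2 ^ ν₁ - δ) (hδb : 0 < δ * b)
    (T : ℤ → ℤ) (hT : ∀ n, T n = if n % 2 = 0 then n / 2 else (a * n + b) / 2) :
    T^[ν₁] (δ * b) = δ * b := by
  have hhalve : ∀ (k : ℕ) (m : ℤ), T^[k] (2 ^ k * m) = m := by
    intro k
    induction k with
    | zero => intro m; simp
    | succ k ih =>
      intro m
      have h2 : (2 : ℤ) ^ (k + 1) * m = 2 * (2 ^ k * m) := by ring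
      have hT2 : T (2 ^ (k + 1) * m) = 2 ^ k * m := by
        rw [hT]
        rw [h2]
        simp [Int.mul_ediv_cancel_left, Int.mul_emod_right]
      rw [Function.iterate_succ_apply, hT2, ih]
  have hδ2 : δ * δ = 1 := by rcases hδ with h | h <;> simp [h]
  have hodd : (δ * b) % 2 ≠ 0 := by
    have : Odd (δ * b) := by
      rcases hδ with h | h <;> simp [h, hb, hb.neg]
    rw [Int.odd_iff] at this
    omega
  have hstep : T (δ * b) = 2 ^ (ν₁ - 1) * (δ * b) := by
    rw [hT, if_neg hodd]
    have : a * (δ * b) + b = 2 * (2 ^ (ν₁ - 1) * (δ * b)) := by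
      have : (2 : ℤ) * 2 ^ (ν₁ - 1) = 2 ^ ν₁ := by
        rw [← pow_succ']
        congr 1
        omega
      rw [haν]
      linear_combination (-(δ * b)) * this - b * hδ2
    rw [this, Int.mul_ediv_cancel_left _ (by norm_num)]
  obtain ⟨k, hk⟩ : ∃ k, ν₁ = k + 1 := ⟨ν₁ - 1, by omega⟩
  subst hk
  rw [Function.iterate_succ_apply, hstep]
  simpa using hhalve k (δ * b)
end

section
/- Let a, b be odd integers with a ≥ 3, b ≥ 1, and let T be the generalized Collatz map. Suppose Ω is a cycle of T with K odd elements and L even elements (K ≥ 1). Then 0 < (K+L) - K·log(a)/log(2) ≤ bK / (a·log(2)·min(Ω₁)), where Ω₁ is the set of odd elements of Ω. -/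
/-!
Since `T` permutes `Ω`, `∏_{x ∈ Ω} T x / x = 1`. The factor `2 T x / x` is `1` for even `x` and
`a (1 + b / (a x))` for odd `x`, so `2 ^ (K + L) = a ^ K ∏_{x ∈ Ω₁} (1 + b / (a x))`, that is
`(K + L) log 2 - K log a = ∑_{x ∈ Ω₁} log (1 + b / (a x))`.
Each summand lies in `(0, b / (a min Ω₁)]` because `0 < log (1 + t) ≤ t` for `t > 0`.
-/

open Finset Real

theorem Finset.prod_comp_eq_prod_of_image_eq {α M : Type*} [DecidableEq α] [CommMonoid M]
    {s : Finset α} {f : α → α} (h : s.image f = s) (g : α → M) :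
    ∏ x ∈ s, g (f x) = ∏ x ∈ s, g x := by
  conv_rhs => rw [← h]
  exact (prod_image (injOn_of_card_image_eq (by rw [h]))).symm

section GeneralizedCollatz

variable {a b : ℤ} {T : ℤ → ℤ}

lemma two_mul_apply_eq_ite (ha : Odd a) (hb : Odd b)
    (hT : ∀ n, T n = if n % 2 = 0 then n / 2 else (a * n + b) / 2) (n : ℤ) :
    2 * T n = if Odd n then a * n + b else n := by
  rw [hT]
  by_cases hn : Odd n
  · have hn2 : n % 2 ≠ 0 := by rw [Int.odd_iff] at hn; omega
    rw [if_neg hn2, if_pos hn, Int.mul_ediv_cancel' ((ha.mul hn).add_odd hb).two_dvd]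
  · have hn2 : n % 2 = 0 := Int.even_iff.mp (Int.not_odd_iff_even.mp hn)
    rw [if_pos hn2, if_neg hn, Int.mul_ediv_cancel' (Int.dvd_of_emod_eq_zero hn2)]

theorem two_pow_card_eq_prod_of_image_eq (ha : Odd a) (hb : Odd b)
    (hT : ∀ n, T n = if n % 2 = 0 then n / 2 else (a * n + b) / 2)
    {Ω : Finset ℤ} (h0 : ∀ x ∈ Ω, x ≠ 0) (hcycle : Ω.image T = Ω) :
    (2 : ℝ) ^ #Ω = ∏ x ∈ Ω with Odd x, ((a : ℝ) + b / x) := by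
  have hfactor : ∀ x ∈ Ω, (2 * T x / x : ℝ) = if Odd x then (a : ℝ) + b / x else 1 := by
    intro x hx
    have hx : (x : ℝ) ≠ 0 := by exact_mod_cast h0 x hx
    have h := congrArg (Int.cast : ℤ → ℝ) (two_mul_apply_eq_ite ha hb hT x)
    push_cast at h
    rw [h]
    split_ifs
    · field_simp
    · exact div_self hx
  have hprod : ∏ x ∈ Ω, (x : ℝ) ≠ 0 := prod_ne_zero_iff.2 fun x hx ↦ by exact_mod_cast h0 x hx
  calc (2 : ℝ) ^ #Ω = ∏ x ∈ Ω, (2 * T x / x : ℝ) := by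
        rw [prod_div_distrib, prod_mul_distrib, prod_const,
          prod_comp_eq_prod_of_image_eq hcycle, mul_div_cancel_right₀ _ hprod]
    _ = ∏ x ∈ Ω, if Odd x then (a : ℝ) + b / x else 1 := prod_congr rfl hfactor
    _ = ∏ x ∈ Ω with Odd x, ((a : ℝ) + b / x) := (prod_filter _ _).symm

theorem card_mul_log_two_sub_eq_sum_log (ha : Odd a) (hb : Odd b) (ha0 : 0 < a) (hb0 : 0 < b)
    (hT : ∀ n, T n = if n % 2 = 0 then n / 2 else (a * n + b) / 2)
    {Ω : Finset ℤ} (hpos : ∀ x ∈ Ω, 0 < x) (hcycle : Ω.image T = Ω) :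
    #Ω * log 2 - #{x ∈ Ω | Odd x} * log a = ∑ x ∈ Ω with Odd x, log (1 + b / (a * x)) := by
  have haR : (0 : ℝ) < a := by exact_mod_cast ha0
  have hbR : (0 : ℝ) < b := by exact_mod_cast hb0
  have hxR : ∀ x ∈ {x ∈ Ω | Odd x}, (0 : ℝ) < x := fun x hx ↦ by
    exact_mod_cast hpos x (mem_filter.1 hx).1
  have hfactor : ∀ x ∈ {x ∈ Ω | Odd x}, (a : ℝ) + b / x = a * (1 + b / (a * x)) := fun x hx ↦ by
    have := hxR x hx
    field_simp
  have h := congrArg log (two_pow_card_eq_prod_of_image_eq ha hb hT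
    (fun x hx ↦ (hpos x hx).ne') hcycle)
  rw [prod_congr rfl hfactor, prod_mul_distrib, prod_const, log_pow,
    log_mul (by positivity) (prod_ne_zero_iff.2 fun x hx ↦ by have := hxR x hx; positivity),
    log_pow, log_prod fun x hx ↦ by have := hxR x hx; positivity] at h
  linarith

end GeneralizedCollatz

section LogBounds

variable {s : Finset ℤ} {a b : ℝ}

lemma sum_log_one_add_div_pos (hs : s.Nonempty) (hpos : ∀ x ∈ s, 0 < x) (ha : 0 < a)
    (hb : 0 < b) : 0 < ∑ x ∈ s, log (1 + b / (a * x)) :=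
  sum_pos (fun x hx ↦ by
    have : (0 : ℝ) < x := by exact_mod_cast hpos x hx
    exact log_pos (by simp only [lt_add_iff_pos_right]; positivity)) hs

lemma sum_log_one_add_div_le (hs : s.Nonempty) (hpos : ∀ x ∈ s, 0 < x) (ha : 0 < a)
    (hb : 0 ≤ b) : ∑ x ∈ s, log (1 + b / (a * x)) ≤ #s * (b / (a * s.min' hs)) := by
  have hmin : (0 : ℝ) < s.min' hs := by exact_mod_cast hpos _ (s.min'_mem hs)
  rw [← nsmul_eq_mul]
  refine sum_le_card_nsmul _ _ _ fun x hx ↦ ?_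
  have hx : ((s.min' hs : ℤ) : ℝ) ≤ x := by exact_mod_cast s.min'_le x hx
  have hx0 : (0 : ℝ) < x := hmin.trans_le hx
  calc log (1 + b / (a * x)) ≤ 1 + b / (a * x) - 1 := log_le_sub_one_of_pos (by positivity)
    _ = b / (a * x) := add_sub_cancel_left _ _
    _ ≤ b / (a * s.min' hs) := by gcongr

end LogBounds

theorem cycle_log_inequality_general
    (a b : ℤ) (ha : Odd a) (hb : Odd b) (ha3 : 3 ≤ a) (hb1 : 1 ≤ b)
    (T : ℤ → ℤ) (hT : ∀ n, T n = if n % 2 = 0 then n / 2 else (a * n + b) / 2)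
    (Ω : Finset ℤ) (hpos : ∀ x ∈ Ω, 0 < x) (hcycle : Ω.image T = Ω)
    (Ω₁ : Finset ℤ) (hΩ₁ : Ω₁ = Ω.filter (fun x => Odd x))
    (K L : ℕ) (hK : K = Ω₁.card) (hL : L = (Ω \ Ω₁).card)
    (hne : Ω₁.Nonempty) :
    0 < (K + L : ℝ) - K * (Real.log a / Real.log 2) ∧
      (K + L : ℝ) - K * (Real.log a / Real.log 2) ≤
        b * K / (a * Real.log 2 * (Ω₁.min' hne : ℝ)) := by
  have hlog2 : 0 < log 2 := log_pos one_lt_two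
  have ha0 : 0 < a := by omega
  have hb0 : 0 < b := by omega
  have haR : (0 : ℝ) < a := by exact_mod_cast ha0
  have hbR : (0 : ℝ) < b := by exact_mod_cast hb0
  have hΩ₁pos : ∀ x ∈ Ω₁, 0 < x := fun x hx ↦ hpos x (by rw [hΩ₁] at hx; exact (mem_filter.1 hx).1)
  have hcard : #Ω = K + L := by
    rw [hK, hL, add_comm, card_sdiff_add_card_eq_card (by rw [hΩ₁]; exact filter_subset _ _)]
  have hsum := card_mul_log_two_sub_eq_sum_log ha hb ha0 hb0 hT hpos hcycle
  rw [← hΩ₁, ← hK, hcard] at hsum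
  have hdiv : (K + L : ℝ) - K * (log a / log 2) = (∑ x ∈ Ω₁, log (1 + b / (a * x))) / log 2 := by
    rw [← hsum]
    push_cast
    field_simp
  rw [hdiv, hK]
  refine ⟨div_pos (sum_log_one_add_div_pos hne hΩ₁pos haR hbR) hlog2, ?_⟩
  calc (∑ x ∈ Ω₁, log (1 + b / (a * x))) / log 2
      ≤ #Ω₁ * (b / (a * Ω₁.min' hne)) / log 2 := by
        gcongr
        exact sum_log_one_add_div_le hne hΩ₁pos haR hbR.le
    _ = b * #Ω₁ / (a * log 2 * Ω₁.min' hne) := by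
        field_simp

/-- For a cycle `Ω` of `T` with `K` odd and `L` even elements,
`0 < (K+L) - K·log a/log 2 ≤ b·K/(a·log 2·min Ω₁)`. -/
theorem cycle_log_inequality
    (a b : ℤ) (ha : Odd a) (hb : Odd b) (ha3 : 3 ≤ a) (hb1 : 1 ≤ b)
    (T : ℤ → ℤ) (hT : ∀ n, T n = if n % 2 = 0 then n / 2 else (a * n + b) / 2)
    (Ω : Finset ℤ) (hpos : ∀ x ∈ Ω, 0 < x) (hcycle : Ω.image T = Ω)
    (Ω₁ : Finset ℤ) (hΩ₁ : Ω₁ = Ω.filter (fun x => Odd x))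
    (K L : ℕ) (hK : K = Ω₁.card) (hL : L = (Ω \ Ω₁).card)
    (hK1 : 1 ≤ K) (hne : Ω₁.Nonempty) :
    0 < (K + L : ℝ) - K * (Real.log a / Real.log 2) ∧
      (K + L : ℝ) - K * (Real.log a / Real.log 2) ≤
        b * K / (a * Real.log 2 * (Ω₁.min' hne : ℝ)) :=
  cycle_log_inequality_general a b ha hb ha3 hb1 T hT Ω hpos hcycle Ω₁ hΩ₁ K L hK hL hne
end

section
/- Let a, b be odd integers with a ≥ 3, b ≥ 1, set c₀ = a·log(2)/b and ξ = log(a)/log(2) with continued fraction convergents pₙ/qₙ. For any cycle Ω of T with K odd elements, and any n ≥ 1, K ≥ min(qₙ, c₀·min(Ω₁)/(qₙ + q_{n+1})), where Ω₁ is the set of odd elements of Ω. -/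
/-!
Since `T` permutes the cycle `Ω` and `2 T x` is `x` or `a x + b`, multiplying over `Ω` gives
`2 ^ |Ω| ∏_{Ω₁} x = ∏_{Ω₁} (a x + b)`. Taking logarithms,
`0 ≤ |Ω| - K ξ = ∑_{Ω₁} log (1 + b / (a x)) / log 2 ≤ K / (c₀ min Ω₁)`.
If `K < qₙ`, the best-approximation property of `pₙ / qₙ` and the lower bound on
`|pₙ - qₙ ξ|` give `1 / (qₙ + q_{n+1}) < |pₙ - qₙ ξ| < ||Ω| - K ξ| ≤ K / (c₀ min Ω₁)`.
-/

open Finset Real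

def collatzMap (a b n : ℤ) : ℤ :=
  if n % 2 = 0 then n / 2 else (a * n + b) / 2

theorem two_mul_collatzMap {a b : ℤ} (ha : Odd a) (hb : Odd b) (n : ℤ) :
    2 * collatzMap a b n = if Odd n then a * n + b else n := by
  unfold collatzMap
  rcases Int.even_or_odd n with hn | hn
  · rw [if_pos (Int.even_iff.mp hn), if_neg (Int.not_odd_iff_even.mpr hn)]
    exact Int.mul_ediv_cancel' hn.two_dvd
  · rw [if_neg (Int.odd_iff.mp hn ▸ one_ne_zero), if_pos hn]
    exact Int.mul_ediv_cancel' ((ha.mul hn).add_odd hb).two_dvd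

theorem Finset.prod_comp_of_image_eq {α M : Type*} [DecidableEq α] [CommMonoid M]
    {s : Finset α} {T : α → α} (h : s.image T = s) (f : α → M) :
    ∏ x ∈ s, f (T x) = ∏ x ∈ s, f x := by
  conv_rhs => rw [← h]
  rw [prod_image (injOn_of_card_image_eq (by rw [h]))]

theorem two_pow_card_mul_prod_odd_eq {a b : ℤ} (ha : Odd a) (hb : Odd b) {Ω : Finset ℤ}
    (h0 : 0 ∉ Ω) (hcycle : Ω.image (collatzMap a b) = Ω) :
    2 ^ #Ω * ∏ x ∈ Ω with Odd x, x = ∏ x ∈ Ω with Odd x, (a * x + b) := by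
  have hcancel : ∏ x ∈ Ω with ¬Odd x, x ≠ 0 :=
    prod_ne_zero_iff.mpr fun x hx hx0 => h0 (hx0 ▸ (mem_filter.mp hx).1)
  refine mul_right_cancel₀ hcancel ?_
  calc (2 ^ #Ω * ∏ x ∈ Ω with Odd x, x) * ∏ x ∈ Ω with ¬Odd x, x
      = ∏ x ∈ Ω, 2 * collatzMap a b x := by
        rw [mul_assoc, prod_filter_mul_prod_filter_not, prod_mul_distrib, prod_const]
        exact congrArg _ (prod_comp_of_image_eq hcycle id).symm
    _ = ∏ x ∈ Ω, if Odd x then a * x + b else x :=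
        prod_congr rfl fun x _ => two_mul_collatzMap ha hb x
    _ = (∏ x ∈ Ω with Odd x, (a * x + b)) * ∏ x ∈ Ω with ¬Odd x, x := by
        rw [prod_ite]

theorem card_mul_log_two_sub_eq_sum_log_s8 {ι : Type*} {S : Finset ι} {x : ι → ℝ} {a b : ℝ}
    {N : ℕ} (ha : 0 < a) (hb : 0 ≤ b) (hx : ∀ i ∈ S, 0 < x i)
    (h : 2 ^ N * ∏ i ∈ S, x i = ∏ i ∈ S, (a * x i + b)) :
    N * log 2 - #S * log a = ∑ i ∈ S, log (1 + b / (a * x i)) := by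
  have hfactor : ∀ i ∈ S, a * x i + b = a * x i * (1 + b / (a * x i)) := fun i hi => by
    rw [mul_add, mul_one, mul_div_cancel₀ _ (mul_pos ha (hx i hi)).ne']
  have hpow : 2 ^ N = a ^ #S * ∏ i ∈ S, (1 + b / (a * x i)) := by
    refine mul_right_cancel₀ (prod_pos hx).ne' ?_
    rw [h, prod_congr rfl hfactor, prod_mul_distrib, prod_mul_distrib, prod_const]
    ring
  have hfactor_pos : ∀ i ∈ S, 0 < 1 + b / (a * x i) := fun i hi => by
    have := hx i hi
    positivity
  have hlog := congrArg log hpow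
  rw [log_pow, log_mul (by positivity) (prod_pos hfactor_pos).ne', log_pow,
    log_prod fun i hi => (hfactor_pos i hi).ne'] at hlog
  linarith

theorem abs_sub_card_mul_log_div_log_two_le {ι : Type*} {S : Finset ι} {x : ι → ℝ}
    {a b m : ℝ} {N : ℕ} (ha : 0 < a) (hb : 0 < b) (hm : 0 < m) (hxm : ∀ i ∈ S, m ≤ x i)
    (h : 2 ^ N * ∏ i ∈ S, x i = ∏ i ∈ S, (a * x i + b)) :
    |N - #S * (log a / log 2)| ≤ #S / (a * log 2 / b * m) := by
  have hx : ∀ i ∈ S, 0 < x i := fun i hi => hm.trans_le (hxm i hi)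
  have hlog2 : 0 < log 2 := log_pos one_lt_two
  have hsum := card_mul_log_two_sub_eq_sum_log_s8 ha hb.le hx h
  have hterm_nonneg : ∀ i ∈ S, 0 ≤ log (1 + b / (a * x i)) := fun i hi =>
    log_nonneg (le_add_of_nonneg_right (div_pos hb (mul_pos ha (hx i hi))).le)
  have hterm_le : ∀ i ∈ S, log (1 + b / (a * x i)) ≤ b / (a * m) := fun i hi => by
    have := hx i hi
    calc log (1 + b / (a * x i)) ≤ b / (a * x i) := by
          linarith [log_le_sub_one_of_pos (by positivity : 0 < 1 + b / (a * x i))]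
      _ ≤ b / (a * m) := by gcongr; exact hxm i hi
  have hlower : 0 ≤ N * log 2 - #S * log a := hsum ▸ sum_nonneg hterm_nonneg
  have hupper : N * log 2 - #S * log a ≤ #S * (b / (a * m)) := by
    rw [hsum, ← nsmul_eq_mul]
    exact sum_le_card_nsmul _ _ _ hterm_le
  have hrewrite : (N : ℝ) - #S * (log a / log 2) = (N * log 2 - #S * log a) / log 2 := by
    field_simp
  rw [hrewrite, abs_of_nonneg (div_nonneg hlower hlog2.le), div_le_iff₀ hlog2]
  calc N * log 2 - #S * log a ≤ #S * (b / (a * m)) := hupper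
    _ = #S / (a * log 2 / b * m) * log 2 := by field_simp

theorem min_le_of_best_approx {ξ C : ℝ} {P : ℤ} {Q Q' : ℕ} (hC : 0 < C)
    (hbest : ∀ p' : ℤ, ∀ q' : ℕ, 1 ≤ q' → q' < Q → |P - Q * ξ| < |p' - q' * ξ|)
    (hlow : 1 / (Q + Q' : ℝ) < |P - Q * ξ|) {N : ℤ} {K : ℕ} (hK : 1 ≤ K)
    (happrox : |N - K * ξ| ≤ K / C) :
    min (Q : ℝ) (C / (Q + Q')) ≤ K := by
  rcases le_or_gt Q K with hQK | hKQ
  · exact min_le_of_left_le (by exact_mod_cast hQK)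
  refine min_le_of_right_le ?_
  have hQ : (0 : ℝ) < Q + Q' := by
    have : (1 : ℝ) ≤ Q := by exact_mod_cast hK.trans hKQ.le
    positivity
  have : 1 / (Q + Q' : ℝ) < K / C := (hlow.trans (hbest N K hK hKQ)).trans_le happrox
  rw [div_lt_div_iff₀ hQ hC] at this
  rw [div_le_iff₀ hQ]
  linarith

theorem cycle_length_lower_bound_general
    (a b : ℤ) (ha : Odd a) (hb : Odd b) (ha3 : 3 ≤ a) (hb1 : 1 ≤ b)
    (T : ℤ → ℤ) (hT : ∀ n, T n = if n % 2 = 0 then n / 2 else (a * n + b) / 2)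
    (ξ : ℝ) (hξ : ξ = Real.log a / Real.log 2)
    (p : ℕ → ℤ) (q : ℕ → ℕ)
    -- best-approximation property of the convergents pₙ/qₙ of ξ
    (hbest : ∀ n : ℕ, ∀ p' : ℤ, ∀ q' : ℕ, 1 ≤ q' → q' < q n →
      |(p n : ℝ) - (q n : ℝ) * ξ| < |(p' : ℝ) - (q' : ℝ) * ξ|)
    (hlow : ∀ n : ℕ, (1 : ℝ) / (q n + q (n + 1)) < |(p n : ℝ) - (q n : ℝ) * ξ|)
    (Ω : Finset ℤ) (hpos : ∀ x ∈ Ω, 0 < x) (hcycle : Ω.image T = Ω)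
    (Ω₁ : Finset ℤ) (hΩ₁ : Ω₁ = Ω.filter (fun x => Odd x)) (hne : Ω₁.Nonempty)
    (K : ℕ) (hK : K = Ω₁.card)
    (c₀ : ℝ) (hc₀ : c₀ = a * Real.log 2 / b) :
    ∀ n : ℕ, 1 ≤ n →
      (K : ℝ) ≥ min (q n : ℝ) (c₀ * (Ω₁.min' hne : ℝ) / ((q n : ℝ) + (q (n + 1) : ℝ))) := by
  intro n _
  obtain rfl : T = collatzMap a b := funext hT
  subst hξ hK hc₀
  have haR : (0 : ℝ) < a := by exact_mod_cast (by omega : (0 : ℤ) < a)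
  have hbR : (0 : ℝ) < b := by exact_mod_cast hb1
  have hm : (0 : ℝ) < Ω₁.min' hne := by
    have hsub : Ω₁ ⊆ Ω := hΩ₁ ▸ filter_subset _ _
    exact_mod_cast hpos _ (hsub (min'_mem Ω₁ hne))
  have hprod : (2 : ℝ) ^ #Ω * ∏ x ∈ Ω₁, (x : ℝ) = ∏ x ∈ Ω₁, (a * (x : ℝ) + b) := by
    have := congrArg (Int.cast : ℤ → ℝ)
      (two_pow_card_mul_prod_odd_eq ha hb (fun h0 => (hpos 0 h0).false) hcycle)
    push_cast at this
    rwa [hΩ₁]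
  have hC : 0 < a * log 2 / b * (Ω₁.min' hne : ℝ) :=
    mul_pos (div_pos (mul_pos haR (log_pos one_lt_two)) hbR) hm
  refine min_le_of_best_approx hC (hbest n) (hlow n) (N := #Ω) (card_pos.mpr hne) ?_
  simpa using abs_sub_card_mul_log_div_log_two_le haR hbR hm
    (fun x hx => by exact_mod_cast min'_le _ x hx) hprod

/-- With `c₀ = a log 2 / b`, `ξ = log a / log 2` with continued-fraction
convergents `pₙ/qₙ`, any cycle `Ω` of `T` with `K` odd elements satisfies, for all
`n ≥ 1`, `K ≥ min (qₙ, c₀ · min Ω₁ / (qₙ + q_{n+1}))`. -/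
theorem cycle_length_lower_bound
    (a b : ℤ) (ha : Odd a) (hb : Odd b) (ha3 : 3 ≤ a) (hb1 : 1 ≤ b)
    (T : ℤ → ℤ) (hT : ∀ n, T n = if n % 2 = 0 then n / 2 else (a * n + b) / 2)
    (ξ : ℝ) (hξ : ξ = Real.log a / Real.log 2)
    (p : ℕ → ℤ) (q : ℕ → ℕ) (hqmono : StrictMono q) (hq0 : q 0 = 1)
    -- best-approximation property of the convergents pₙ/qₙ of ξ
    (hbest : ∀ n : ℕ, ∀ p' : ℤ, ∀ q' : ℕ, 1 ≤ q' → q' < q n →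
      |(p n : ℝ) - (q n : ℝ) * ξ| < |(p' : ℝ) - (q' : ℝ) * ξ|)
    (hlow : ∀ n : ℕ, (1 : ℝ) / (q n + q (n + 1)) < |(p n : ℝ) - (q n : ℝ) * ξ|)
    (Ω : Finset ℤ) (hpos : ∀ x ∈ Ω, 0 < x) (hcycle : Ω.image T = Ω)
    (Ω₁ : Finset ℤ) (hΩ₁ : Ω₁ = Ω.filter (fun x => Odd x)) (hne : Ω₁.Nonempty)
    (K : ℕ) (hK : K = Ω₁.card)
    (c₀ : ℝ) (hc₀ : c₀ = a * Real.log 2 / b) :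
    ∀ n : ℕ, 1 ≤ n →
      (K : ℝ) ≥ min (q n : ℝ) (c₀ * (Ω₁.min' hne : ℝ) / ((q n : ℝ) + (q (n + 1) : ℝ))) :=
  cycle_length_lower_bound_general a b ha hb ha3 hb1 T hT ξ hξ p q hbest hlow Ω hpos hcycle Ω₁ hΩ₁
    hne K hK c₀ hc₀
end

section
/- Let a, b be odd with a ≥ 3, b ≥ 1, and suppose T has a cycle with m oscillations, with local minima x₀,...,x_{m-1} (odd), rise lengths k₀,...,k_{m-1} and fall lengths ℓ₀,...,ℓ_{m-1}, so that (a/2)^{kᵢ}·xᵢ + (b/(a-2))·((a/2)^{kᵢ} - 1) = 2^{ℓᵢ}·x_{i+1} for each i (indices mod m). Then with K = Σkᵢ and L = Σℓᵢ: 0 < (K+L) - K·log(a)/log(2) < (b/((a-2)·log 2)) · Σ_{i=0}^{m-1} 1/xᵢ. -/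
/-!
With `r = a/2 > 1` and `c = b/(a-2) > 0`, the cycle equation reads
`rᵏ xᵢ + c (rᵏ - 1) = 2^ℓ xᵢ₊₁`, which pins `2^ℓ xᵢ₊₁` strictly between `rᵏ xᵢ` and
`rᵏ (xᵢ + c)`. Taking logarithms and using `log (1 + c/x) < c/x`, each oscillation contributes
`ℓᵢ log 2 - kᵢ log r + (log xᵢ₊₁ - log xᵢ) ∈ (0, c/xᵢ)`. Around the cycle the `log xᵢ` terms
telescope away, leaving `0 < L log 2 - K log (a/2) < c Σ 1/xᵢ`; divide by `log 2`.
-/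

open Finset Real

lemma mul_lt_and_lt_mul_add_of_eq {p c x z : ℝ} (hp : 1 < p) (hc : 0 < c)
    (h : p * x + c * (p - 1) = z) : p * x < z ∧ z < p * (x + c) := by
  constructor <;> nlinarith

lemma log_add_lt_log_add_div {x c : ℝ} (hx : 0 < x) (hc : 0 < c) :
    log (x + c) < log x + c / x := by
  have hne : (x + c) / x ≠ 1 := by
    rw [Ne, div_eq_one_iff_eq hx.ne']
    linarith
  have h := log_lt_sub_one_of_pos (by positivity) hne
  rw [log_div (by positivity) hx.ne', add_div, div_self hx.ne'] at h
  linarith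

lemma oscillation_log_bounds {r c x y : ℝ} {k ℓ : ℕ} (hr : 1 < r) (hk : 1 ≤ k) (hc : 0 < c)
    (hx : 0 < x) (h : r ^ k * x + c * (r ^ k - 1) = 2 ^ ℓ * y) :
    0 < ℓ * log 2 - k * log r + (log y - log x) ∧
      ℓ * log 2 - k * log r + (log y - log x) < c / x := by
  have hr0 : 0 < r := one_pos.trans hr
  obtain ⟨hlow, hhigh⟩ :=
    mul_lt_and_lt_mul_add_of_eq (one_lt_pow₀ hr (by omega : k ≠ 0)) hc h
  have hy : 0 < y :=
    pos_of_mul_pos_right ((by positivity : 0 < r ^ k * x).trans hlow) (by positivity)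
  have hlow' := log_lt_log (by positivity) hlow
  have hhigh' := log_lt_log (by positivity) hhigh
  rw [log_mul (by positivity) hx.ne', log_mul (by positivity) hy.ne', log_pow, log_pow] at hlow'
  rw [log_mul (by positivity) hy.ne', log_mul (by positivity) (by positivity), log_pow,
    log_pow] at hhigh'
  constructor <;> linarith [log_add_lt_log_add_div hx hc]

lemma sum_range_add_sub_of_eq {M : Type*} [AddCommGroup M] {f g : ℕ → M} {m : ℕ}
    (h : f m = f 0) : ∑ i ∈ range m, (g i + (f (i + 1) - f i)) = ∑ i ∈ range m, g i := by
  rw [sum_add_distrib, sum_range_sub, h, sub_self, add_zero]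

theorem m_oscillation_inequality_general
    (a b : ℤ) (ha3 : 3 ≤ a) (hb1 : 1 ≤ b)
    (m : ℕ) (hm : 1 ≤ m)
    (x : ℕ → ℤ) (k ℓ : ℕ → ℕ)
    (hxpos : ∀ i < m, 0 < x i)
    (hk : ∀ i < m, 1 ≤ k i)
    (hxm : x m = x 0)
    (heq : ∀ i < m,
      ((a : ℝ) / 2) ^ (k i) * (x i : ℝ) +
          ((b : ℝ) / ((a : ℝ) - 2)) * (((a : ℝ) / 2) ^ (k i) - 1) =
        (2 : ℝ) ^ (ℓ i) * (x (i + 1) : ℝ))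
    (K L : ℕ) (hK : K = ∑ i ∈ Finset.range m, k i)
    (hL : L = ∑ i ∈ Finset.range m, ℓ i) :
    0 < (K + L : ℝ) - K * (Real.log a / Real.log 2) ∧
      (K + L : ℝ) - K * (Real.log a / Real.log 2) <
        ((b : ℝ) / (((a : ℝ) - 2) * Real.log 2)) *
          ∑ i ∈ Finset.range m, (1 : ℝ) / (x i : ℝ) := by
  have ha : (3 : ℝ) ≤ a := by exact_mod_cast ha3
  have hc : 0 < (b : ℝ) / (a - 2) := div_pos (by exact_mod_cast hb1) (by linarith)
  have hlog2 : 0 < log 2 := log_pos one_lt_two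
  have hne : (range m).Nonempty := nonempty_range_iff.mpr (by omega)
  set d : ℕ → ℝ := fun i => ℓ i * log 2 - k i * log (a / 2) + (log (x (i + 1)) - log (x i))
  have hd : ∀ i ∈ range m, 0 < d i ∧ d i < b / (a - 2) * (1 / x i) := fun i hi => by
    rw [mem_range] at hi
    rw [mul_one_div]
    exact oscillation_log_bounds (by linarith) (hk i hi) hc (by exact_mod_cast hxpos i hi)
      (heq i hi)
  have hsum : ∑ i ∈ range m, d i = L * log 2 - K * log (a / 2) := by
    rw [sum_range_add_sub_of_eq (f := fun i => log (x i)) (by rw [hxm]), sum_sub_distrib,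
      ← sum_mul, ← sum_mul, hK, hL]
    push_cast
    rfl
  have hgoal : (K + L : ℝ) - K * (log a / log 2) = (∑ i ∈ range m, d i) / log 2 := by
    rw [hsum, log_div (by positivity) two_ne_zero]
    field_simp
    ring
  rw [hgoal, ← div_div, div_mul_eq_mul_div, div_lt_div_iff_of_pos_right hlog2, mul_sum]
  exact ⟨div_pos (sum_pos (fun i hi => (hd i hi).1) hne) hlog2,
    sum_lt_sum_of_nonempty hne fun i hi => (hd i hi).2⟩

/-- For a cycle with `m` oscillations with odd local minima `xᵢ`,
rise lengths `kᵢ` and fall lengths `ℓᵢ`, setting `K = Σkᵢ`, `L = Σℓᵢ`: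
`0 < (K+L) - K log a/log 2 < (b/((a-2) log 2)) Σ 1/xᵢ`. -/
theorem m_oscillation_inequality
    (a b : ℤ) (ha : Odd a) (hb : Odd b) (ha3 : 3 ≤ a) (hb1 : 1 ≤ b)
    (m : ℕ) (hm : 1 ≤ m)
    (x : ℕ → ℤ) (k ℓ : ℕ → ℕ)
    (hxodd : ∀ i < m, Odd (x i)) (hxpos : ∀ i < m, 0 < x i)
    (hk : ∀ i < m, 1 ≤ k i) (hℓ : ∀ i < m, 1 ≤ ℓ i)
    (hxm : x m = x 0)
    (heq : ∀ i < m,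
      ((a : ℝ) / 2) ^ (k i) * (x i : ℝ) +
          ((b : ℝ) / ((a : ℝ) - 2)) * (((a : ℝ) / 2) ^ (k i) - 1) =
        (2 : ℝ) ^ (ℓ i) * (x (i + 1) : ℝ))
    (K L : ℕ) (hK : K = ∑ i ∈ Finset.range m, k i)
    (hL : L = ∑ i ∈ Finset.range m, ℓ i) :
    0 < (K + L : ℝ) - K * (Real.log a / Real.log 2) ∧
      (K + L : ℝ) - K * (Real.log a / Real.log 2) <
        ((b : ℝ) / (((a : ℝ) - 2) * Real.log 2)) *
          ∑ i ∈ Finset.range m, (1 : ℝ) / (x i : ℝ) :=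
  m_oscillation_inequality_general a b ha3 hb1 m hm x k ℓ hxpos hk hxm heq K L hK hL
end

section
/- Let ν ≥ 1, a = 2^ν + 1, b = 2^ν - 1, and T the corresponding generalized Collatz map. For integers k > j ≥ 0 and n_k = 2^k - 1, we have T^(j)(n_k) = a^j · 2^(k-j) - 1. -/
/-- For `a = 2^ν + 1`, `b = 2^ν - 1`, `n_k = 2^k - 1` and `j < k`,
`T^[j] n_k = a^j · 2^(k-j) - 1`. -/
theorem iterate_of_mersenne
    (ν : ℕ) (hν : 1 ≤ ν) (a b : ℤ)
    (haval : a = 2 ^ ν + 1) (hbval : b = 2 ^ ν - 1)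
    (T : ℤ → ℤ) (hT : ∀ n, T n = if n % 2 = 0 then n / 2 else (a * n + b) / 2) :
    ∀ k j : ℕ, j < k → T^[j] (2 ^ k - 1) = a ^ j * 2 ^ (k - j) - 1 := by
  intro k j
  induction j with
  | zero => intro hk; simp
  | succ j ih =>
    intro hk
    have hjk : j < k := Nat.lt_of_succ_lt hk
    rw [Function.iterate_succ_apply', ih hjk, hT]
    have hkj : k - j = (k - (j + 1)) + 1 := by omega
    set m := a ^ j * 2 ^ (k - (j + 1)) with hm
    have hn : a ^ j * 2 ^ (k - j) - 1 = 2 * m - 1 := by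
      rw [hkj, pow_succ]; ring
    rw [hn, if_neg (by omega)]
    have h2 : a * (2 * m - 1) + b = 2 * (a * m - 1) := by
      rw [haval, hbval]; ring
    rw [h2, Int.mul_ediv_cancel_left _ (by norm_num), hm, pow_succ]
    ring
end

section
/- Let ν ≥ 1, a = 2^ν + 1, b = 2^ν - 1, and define the expansion factor s(n) = sup_{k≥0} T^(k)(n) / n (possibly ∞). Then the sequence (s(n)) is unbounded: for every M > 0 there exists n with s(n) > M. In fact s(2^k - 1) > (a/2)^(k-1) for all k > 1. -/
/-- For `a = 2^ν + 1`, `b = 2^ν - 1`, the expansion factors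
`s(n) = sup_k T^[k](n)/n` are unbounded; in fact `s(2^k - 1) > (a/2)^(k-1)` for `k > 1`. -/
theorem expansion_factor_unbounded
    (ν : ℕ) (hν : 1 ≤ ν) (a b : ℤ)
    (haval : a = 2 ^ ν + 1) (hbval : b = 2 ^ ν - 1)
    (T : ℤ → ℤ) (hT : ∀ n, T n = if n % 2 = 0 then n / 2 else (a * n + b) / 2) :
    (∀ k : ℕ, 1 < k →
        ∃ j : ℕ, ((a : ℝ) / 2) ^ (k - 1) <
          (T^[j] (2 ^ k - 1) : ℝ) / ((2 : ℝ) ^ k - 1)) ∧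
      ∀ M : ℝ, ∃ n : ℤ, 0 < n ∧ ∃ j : ℕ, M < (T^[j] n : ℝ) / (n : ℝ) := by
  have ha3 : (3:ℤ) ≤ a := by
    have h2 : (2:ℤ) ≤ 2 ^ ν :=
      (pow_one (2:ℤ)) ▸ pow_le_pow_right₀ (by norm_num) hν
    rw [haval]; linarith
  have hba : b = a - 2 := by rw [haval, hbval]; ring
  have hX : ∀ X : ℤ, (2 * X - 1) % 2 = 1 := by intro X; omega
  have key : ∀ k j : ℕ, j + 1 ≤ k → T^[j] (2 ^ k - 1) = a ^ j * 2 ^ (k - j) - 1 := by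
    intro k j
    induction j with
    | zero => intro _; simp
    | succ j ih =>
      intro hj
      have hjk : j + 1 ≤ k := by omega
      have ihv := ih hjk
      have hkj : k - j = (k - (j + 1)) + 1 := by omega
      set m := k - (j + 1) with hm
      rw [Function.iterate_succ_apply', ihv, hkj, hT]
      have hrw : a ^ j * 2 ^ (m + 1) - 1 = 2 * (a ^ j * 2 ^ m) - 1 := by ring
      have hodd : (a ^ j * 2 ^ (m + 1) - 1) % 2 ≠ 0 := by
        rw [hrw, hX]; norm_num
      rw [if_neg hodd]
      have h2 : a * (a ^ j * 2 ^ (m + 1) - 1) + b = 2 * (a ^ (j + 1) * 2 ^ m - 1) := by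
        rw [hba]; ring
      rw [h2, Int.mul_ediv_cancel_left _ (by norm_num)]
  have hmain : ∀ k : ℕ, 1 < k →
      ∃ j : ℕ, ((a : ℝ) / 2) ^ (k - 1) <
        (T^[j] (2 ^ k - 1) : ℝ) / ((2 : ℝ) ^ k - 1) := by
    intro k hk
    refine ⟨k - 1, ?_⟩
    have hk1 : (k - 1) + 1 = k := by omega
    have hiter : T^[k-1] (2 ^ k - 1) = 2 * a ^ (k - 1) - 1 := by
      have h := key k (k - 1) (by omega)
      have h1 : k - (k - 1) = 1 := by omega
      rw [h, h1]; ring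
    rw [hiter]
    have hden : (0:ℝ) < (2:ℝ) ^ k - 1 := by
      have h2 : (2:ℝ) ≤ 2 ^ k := by
        have := pow_le_pow_right₀ (by norm_num : (1:ℝ) ≤ 2) (show 1 ≤ k by omega)
        simpa using this
      linarith
    rw [div_pow, div_lt_div_iff₀ (by positivity) hden]
    have hA : (2:ℝ) < (a:ℝ) := by exact_mod_cast (by omega : (2:ℤ) < a)
    have hpow : (2:ℝ) ^ (k - 1) < (a:ℝ) ^ (k - 1) :=
      pow_lt_pow_left₀ hA (by norm_num) (by omega)
    have h2k : (2:ℝ) ^ k = 2 * 2 ^ (k - 1) := by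
      conv_lhs => rw [← hk1]
      rw [pow_succ]; ring
    push_cast
    rw [h2k]
    nlinarith [pow_pos (show (0:ℝ) < 2 by norm_num) (k-1),
      pow_pos (show (0:ℝ) < (a:ℝ) by linarith) (k-1)]
  refine ⟨hmain, ?_⟩
  intro M
  obtain ⟨k, hk⟩ := pow_unbounded_of_one_lt M (show (1:ℝ) < 3/2 by norm_num)
  obtain ⟨j, hj⟩ := hmain (k + 2) (by omega)
  have hpos : (0:ℤ) < 2 ^ (k + 2) - 1 := by
    have := one_lt_pow₀ (by norm_num : (1:ℤ) < 2) (show k + 2 ≠ 0 by omega)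
    linarith
  refine ⟨2 ^ (k + 2) - 1, hpos, j, ?_⟩
  have hA2 : (3:ℝ)/2 ≤ (a:ℝ)/2 := by
    have : (3:ℝ) ≤ (a:ℝ) := by exact_mod_cast ha3
    linarith
  have h1 : ((3:ℝ)/2) ^ k ≤ ((3:ℝ)/2) ^ (k + 1) :=
    pow_le_pow_right₀ (by norm_num) (by omega)
  have h2 : ((3:ℝ)/2) ^ (k + 1) ≤ ((a:ℝ)/2) ^ (k + 1) :=
    pow_le_pow_left₀ (by norm_num) hA2 _
  have hk21 : k + 2 - 1 = k + 1 := by omega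
  rw [hk21] at hj
  have : (((2:ℤ) ^ (k + 2) - 1 : ℤ) : ℝ) = (2:ℝ) ^ (k + 2) - 1 := by push_cast; ring
  rw [this]
  linarith
end

section
/- Let ν ≥ 3 be an integer, a = 2^ν + 1, b = 2^ν - 1, and A_ν = log((a^ν - 1)/b)/log(2). Then ν(ν-1) < A_ν < ν(ν-1) + 1; in particular ⌊A_ν⌋ = ν(ν-1) and A_ν is not an integer. -/
/-- `(N+1)^ν * (N - ν) ≤ N^(ν+1)` for `N ≥ 0`. -/
lemma aux_upper (N : ℝ) (hN : 0 ≤ N) : ∀ ν : ℕ, (N + 1) ^ ν * (N - ν) ≤ N ^ (ν + 1)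
  | 0 => by simp
  | (ν + 1) => by
    have ih := aux_upper N hN ν
    have h1 : (N + 1) ^ (ν + 1) * (N - (ν + 1 : ℕ)) ≤ (N + 1) ^ ν * (N * (N - ν)) := by
      have hp : (0 : ℝ) ≤ (N + 1) ^ ν := pow_nonneg (by linarith) ν
      have h2 : (N + 1) * (N - ((ν : ℝ) + 1)) ≤ N * (N - ν) := by nlinarith
      push_cast
      calc (N + 1) ^ (ν + 1) * (N - ((ν : ℝ) + 1))
          = (N + 1) ^ ν * ((N + 1) * (N - ((ν : ℝ) + 1))) := by ring
        _ ≤ (N + 1) ^ ν * (N * (N - ν)) := by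
            exact mul_le_mul_of_nonneg_left h2 hp
    calc (N + 1) ^ (ν + 1) * (N - ((ν : ℕ) + 1 : ℕ))
        ≤ (N + 1) ^ ν * (N * (N - ν)) := h1
      _ = N * ((N + 1) ^ ν * (N - ν)) := by ring
      _ ≤ N * N ^ (ν + 1) := mul_le_mul_of_nonneg_left ih hN
      _ = N ^ (ν + 1 + 1) := by ring

/-- `N^(ν+1) + (ν+1) * N^ν ≤ (N+1)^(ν+1)` for `N ≥ 0`. -/
lemma aux_lower (N : ℝ) (hN : 0 ≤ N) : ∀ ν : ℕ, N ^ (ν + 1) + (ν + 1 : ℝ) * N ^ ν ≤ (N + 1) ^ (ν + 1)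
  | 0 => by simp
  | (ν + 1) => by
    have ih := aux_lower N hN ν
    have hp : (0 : ℝ) ≤ N ^ ν := pow_nonneg hN ν
    have hp1 : (0 : ℝ) ≤ N ^ (ν + 1) := pow_nonneg hN _
    push_cast
    calc N ^ (ν + 1 + 1) + ((ν : ℝ) + 1 + 1) * N ^ (ν + 1)
        ≤ (N + 1) * (N ^ (ν + 1) + ((ν : ℝ) + 1) * N ^ ν) := by
          have e1 : N ^ (ν + 1 + 1) = N ^ (ν + 1) * N := pow_succ N (ν + 1)
          have e2 : N ^ (ν + 1) = N ^ ν * N := pow_succ N ν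
          rw [e1, e2]; nlinarith [mul_nonneg hp hN]
      _ ≤ (N + 1) * (N + 1) ^ (ν + 1) := mul_le_mul_of_nonneg_left ih (by linarith)
      _ = (N + 1) ^ (ν + 1 + 1) := by ring

lemma nat_two_mul_succ_le (ν : ℕ) (hν : 3 ≤ ν) : 2 * (ν + 1) ≤ 2 ^ ν := by
  induction ν, hν using Nat.le_induction with
  | base => norm_num
  | succ n hn ih =>
    have : 2 ^ (n + 1) = 2 * 2 ^ n := by ring
    omega

/-- For `ν ≥ 3`, `a = 2^ν + 1`, `b = 2^ν - 1` and
`A_ν = log((a^ν - 1)/b)/log 2`, we have `ν(ν-1) < A_ν < ν(ν-1) + 1`; in particular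
`⌊A_ν⌋ = ν(ν-1)` and `A_ν` is not an integer. -/
theorem A_nu_bounds
    (ν : ℕ) (hν : 3 ≤ ν) (a b : ℕ)
    (haval : a = 2 ^ ν + 1) (hbval : b = 2 ^ ν - 1)
    (A : ℝ) (hA : A = Real.log (((a : ℝ) ^ ν - 1) / (b : ℝ)) / Real.log 2) :
    ((ν * (ν - 1) : ℕ) : ℝ) < A ∧ A < ((ν * (ν - 1) : ℕ) : ℝ) + 1 ∧
      ⌊A⌋ = (ν * (ν - 1) : ℕ) ∧ ¬ ∃ z : ℤ, A = (z : ℝ) := by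
  set N : ℝ := (2 : ℝ) ^ ν with hNdef
  have hν1 : ν - 1 + 1 = ν := by omega
  set m : ℕ := ν * (ν - 1) with hm
  have hN8 : (8 : ℝ) ≤ N := by
    have : (2:ℝ)^3 ≤ (2:ℝ)^ν := pow_le_pow_right₀ (by norm_num) hν
    norm_num at this; linarith
  have hNν : (2 : ℝ) * (ν + 1) ≤ N := by
    have h := nat_two_mul_succ_le ν hν
    have : ((2 * (ν + 1) : ℕ) : ℝ) ≤ ((2 ^ ν : ℕ) : ℝ) := Nat.cast_le.mpr h
    push_cast at this; linarith
  have hNνlt : (ν : ℝ) < N := by linarith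
  have ha : (a : ℝ) = N + 1 := by rw [haval]; push_cast; ring
  have hb : (b : ℝ) = N - 1 := by
    rw [hbval]
    have : 1 ≤ 2 ^ ν := Nat.one_le_two_pow
    push_cast [Nat.cast_sub this]; ring
  -- key power identity: N^(ν-1) = 2^m
  have hpow : N ^ (ν - 1) = (2 : ℝ) ^ m := by
    rw [hNdef, ← pow_mul, hm]
  have hNpos : (0 : ℝ) < N := by linarith
  have hNν1pos : (0 : ℝ) < N ^ (ν - 1) := pow_pos hNpos _
  have hNνeq : N ^ ν = N ^ (ν - 1) * N := by rw [← pow_succ, hν1]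
  -- lower bound: N^(ν-1) * (N - 1) < (N+1)^ν - 1
  have hlow : N ^ (ν - 1) * (N - 1) < (N + 1) ^ ν - 1 := by
    have h := aux_lower N (le_of_lt hNpos) (ν - 1)
    rw [hν1] at h
    have hcast : ((ν - 1 : ℕ) : ℝ) + 1 = (ν : ℝ) := by
      have : ((ν - 1 : ℕ) : ℝ) = (ν : ℝ) - 1 := by
        have := hν1; push_cast [Nat.cast_sub (by omega : 1 ≤ ν)]; ring
      rw [this]; ring
    rw [hcast] at h
    have h1 : (1 : ℝ) ≤ N ^ (ν - 1) := one_le_pow₀ (by linarith)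
    have hν3 : (3 : ℝ) ≤ (ν : ℝ) := by exact_mod_cast hν
    nlinarith
  -- upper bound: (N+1)^ν - 1 < 2 * N^(ν-1) * (N - 1)
  have hup : (N + 1) ^ ν - 1 < 2 * N ^ (ν - 1) * (N - 1) := by
    have h := aux_upper N (le_of_lt hNpos) ν
    have hNνgt : (0 : ℝ) < N - ν := by linarith
    have hquad : N ^ 2 ≤ 2 * (N - 1) * (N - ν) := by nlinarith
    have hkey : (N + 1) ^ ν ≤ 2 * N ^ (ν - 1) * (N - 1) := by
      have h2 : N ^ (ν + 1) = N ^ (ν - 1) * N ^ 2 := by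
        rw [← pow_add]; congr 1; omega
      have h3 : (N + 1) ^ ν * (N - ν) ≤ (2 * N ^ (ν - 1) * (N - 1)) * (N - ν) := by
        calc (N + 1) ^ ν * (N - ν) ≤ N ^ (ν + 1) := h
          _ = N ^ (ν - 1) * N ^ 2 := h2
          _ ≤ N ^ (ν - 1) * (2 * (N - 1) * (N - ν)) :=
              mul_le_mul_of_nonneg_left hquad (le_of_lt hNν1pos)
          _ = (2 * N ^ (ν - 1) * (N - 1)) * (N - ν) := by ring
      exact le_of_mul_le_mul_right h3 hNνgt
    linarith
  -- now express A as logb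
  set X : ℝ := ((N + 1) ^ ν - 1) / (N - 1) with hX
  have hA' : A = Real.logb 2 X := by rw [hA, ha, hb, Real.logb]
  have hb1 : (0 : ℝ) < N - 1 := by linarith
  have hXlow : (2 : ℝ) ^ m < X := by
    rw [hX, lt_div_iff₀ hb1, ← hpow]; linarith
  have hXup : X < (2 : ℝ) ^ (m + 1) := by
    rw [hX, div_lt_iff₀ hb1, pow_succ]
    rw [← hpow] at *
    nlinarith
  have hXpos : (0 : ℝ) < X := lt_trans (by positivity) hXlow
  have hlogm : Real.logb 2 ((2:ℝ) ^ m) = (m : ℝ) := by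
    simp [Real.logb_pow, Real.logb_self_eq_one]
  have hlogm1 : Real.logb 2 ((2:ℝ) ^ (m+1)) = (m : ℝ) + 1 := by
    rw [Real.logb_pow]
    simp [Real.logb_self_eq_one]
  have hAlow : (m : ℝ) < A := by
    rw [hA', ← hlogm]
    exact Real.logb_lt_logb (by norm_num) (by positivity) hXlow
  have hAup : A < (m : ℝ) + 1 := by
    rw [hA', ← hlogm1]
    exact Real.logb_lt_logb (by norm_num) hXpos hXup
  have hfloor : ⌊A⌋ = (m : ℤ) := by
    rw [Int.floor_eq_iff]
    constructor
    · push_cast; linarith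
    · push_cast; linarith
  refine ⟨hAlow, hAup, by exact_mod_cast hfloor, ?_⟩
  rintro ⟨z, hz⟩
  have hz' : ⌊A⌋ = z := by rw [hz]; exact Int.floor_intCast z
  have hmz : (m : ℤ) = z := by rw [← hfloor, hz']
  rw [hz, ← hmz] at hAlow
  push_cast at hAlow
  exact lt_irrefl _ hAlow
end

section
/- Let ν ≥ 1, a = 2^ν + 1, b = 2^ν - 1 = a - 2, and suppose T has a nontrivial cycle consisting of one oscillation: x₀ odd, T^(j)(x₀) odd for 0 ≤ j < K, and T^(K)(x₀) = 2^L x₀ with T^(K)(x₀) even (reached after L further halvings back to x₀). Then (2^{K+L} - a^K) divides (a^K - 2^K), and x₀ = (a^K - 2^K)/(2^{K+L} - a^K). -/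
/-- For `a = 2^ν + 1`, `b = a - 2`, a one-oscillation cycle
(`T^[j] x₀` odd for `j < K`, then `T^[K] x₀ = 2^L x₀`) forces
`(2^(K+L) - a^K) ∣ (a^K - 2^K)` and `x₀ = (a^K - 2^K)/(2^(K+L) - a^K)`. -/
theorem one_oscillation_cycle_value
    (ν : ℕ) (hν : 1 ≤ ν) (a b : ℤ)
    (haval : a = 2 ^ ν + 1) (hbval : b = a - 2)
    (T : ℤ → ℤ) (hT : ∀ n, T n = if n % 2 = 0 then n / 2 else (a * n + b) / 2)
    (x₀ : ℤ) (hx₀pos : 0 < x₀) (hx₀odd : Odd x₀)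
    (K L : ℕ) (hK : 1 ≤ K) (hL : 1 ≤ L)
    (hoddrun : ∀ j : ℕ, j < K → Odd (T^[j] x₀))
    (htop : T^[K] x₀ = 2 ^ L * x₀) :
    (2 ^ (K + L) - a ^ K) ∣ (a ^ K - 2 ^ K) ∧
      x₀ = (a ^ K - 2 ^ K) / (2 ^ (K + L) - a ^ K) := by
  have haodd : Odd a := by
    refine ⟨2 ^ (ν - 1), ?_⟩
    have : (2 : ℤ) ^ ν = 2 * 2 ^ (ν - 1) := by
      rw [← pow_succ']
      congr 1
      omega
    rw [haval, this]
  have hbodd : Odd b := by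
    rcases haodd with ⟨k, hk⟩
    exact ⟨k - 1, by omega⟩
  -- key identity
  have key : ∀ j : ℕ, j ≤ K → 2 ^ j * (T^[j] x₀ + 1) = a ^ j * (x₀ + 1) := by
    intro j
    induction j with
    | zero => simp
    | succ j ih =>
      intro hjK
      have hj : j < K := by omega
      have ihj := ih (le_of_lt hj)
      set m := T^[j] x₀ with hm
      have hmodd : Odd m := hoddrun j hj
      have hstep : T^[j + 1] x₀ = T m := by
        rw [Function.iterate_succ_apply']
      have hmod : m % 2 ≠ 0 := by
        rcases hmodd with ⟨k, hk⟩
        omega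
      have hTm : T m = (a * m + b) / 2 := by rw [hT m, if_neg hmod]
      have heven : (2 : ℤ) ∣ (a * m + b) := by
        rcases haodd.mul hmodd with ⟨p, hp⟩
        rcases hbodd with ⟨q, hq⟩
        exact ⟨p + q + 1, by omega⟩
      have h2Tm : 2 * T m = a * m + b := by
        rw [hTm, mul_comm, Int.ediv_mul_cancel heven]
      have : 2 ^ (j + 1) * (T^[j+1] x₀ + 1) = 2 ^ j * (2 * T m + 2) := by
        rw [hstep]; ring
      rw [this, h2Tm, hbval]
      have : 2 ^ j * (a * m + (a - 2) + 2) = a * (2 ^ j * (m + 1)) := by ring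
      rw [this, ihj]
      ring
  have hmain := key K le_rfl
  rw [htop] at hmain
  -- 2^K * (2^L x₀ + 1) = a^K (x₀ + 1)
  have heq : x₀ * (2 ^ (K + L) - a ^ K) = a ^ K - 2 ^ K := by
    have h2 : (2 : ℤ) ^ (K + L) = 2 ^ K * 2 ^ L := pow_add 2 K L
    nlinarith [hmain]
  have hpos : 0 < 2 ^ (K + L) - a ^ K := by
    have haK : (0:ℤ) < a ^ K - 2 ^ K := by
      have ha2 : (2:ℤ) < a := by
        have : (2:ℤ) ≤ 2 ^ ν := by
          calc (2:ℤ) = 2 ^ 1 := (pow_one 2).symm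
          _ ≤ 2 ^ ν := pow_le_pow_right₀ (by norm_num) hν
        omega
      have := pow_lt_pow_left₀ ha2 (by norm_num : (0:ℤ) ≤ 2) (by omega : K ≠ 0)
      omega
    nlinarith [heq]
  refine ⟨⟨x₀, by linarith [heq]⟩, ?_⟩
  have hne : (2 : ℤ) ^ (K + L) - a ^ K ≠ 0 := ne_of_gt hpos
  rw [← heq, Int.mul_ediv_cancel _ hne]
end
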